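/- Let G be an abstract k-molecule and suppose A_k and B_k are two sets of k vertices each making (G, A_k) and (G, B_k) a k-premolecule (i.e., G is isomorphic to a k-molecule with that set as base). Then the induced subgraphs G[A_k \ B_k], G[B_k \ A_k], and G[V(G) \ (A_k ∪ B_k)] are all edgeless, and the induced subgraphs G[A_k] and G[B_k] are isomorphic. -/

import Mathlib

/-!
A premolecule base `A` makes `G` the join of `G[A]` with an edgeless graph on `Aᶜ`. Given two
such bases of the same size, `A \ B ⊆ Bᶜ` and `B \ A ⊆ Aᶜ` are equinumerous edgeless sets,
each completely joined to `A ∩ B` and to the other. Hence fixing `A ∩ B` and matching `A \ B`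
with `B \ A` is an isomorphism `G[A] ≃g G[B]`.
-/

open SimpleGraph

/-- `G` is `m`-connected in the sense of Menger: any two distinct vertices are
joined by `m` pairwise distinct, internally disjoint paths. -/
def MengerConnected {V : Type*} (m : ℕ) (G : SimpleGraph V) : Prop :=
  ∀ u v : V, u ≠ v → ∃ P : Fin m → G.Path u v, Function.Injective P ∧
    ∀ i j, i ≠ j → ∀ x, x ∈ (P i).1.support → x ∈ (P j).1.support → x = u ∨ x = v

/-- The connectivity of a graph: the largest `m` for which it is `m`-connected.
(With this definition the connectivity of the `k`-clique is `k-1`, as in the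
paper's convention.) -/
noncomputable def connectivity {V : Type*} (G : SimpleGraph V) : ℕ :=
  sSup {m | MengerConnected m G}

/-- The `k`-molecule `ϑ_{B_k}^{Bs,h}`: its vertices are a base `B_k` of `k`
vertices (the `Sum.inl` vertices) carrying the internal edge set `Bs`, together
with `h` further vertices `v₁, …, v_h` (the `Sum.inr` vertices), each adjacent
to every base vertex and to no other non-base vertex. -/
def molecule (k h : ℕ) (Bs : SimpleGraph (Fin k)) : SimpleGraph (Fin k ⊕ Fin h) where
  Adj x y :=
    match x, y with
    | Sum.inl a, Sum.inl b => Bs.Adj a b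
    | Sum.inl _, Sum.inr _ => True
    | Sum.inr _, Sum.inl _ => True
    | Sum.inr _, Sum.inr _ => False
  symm := ⟨by rintro (a | a) (b | b) hab <;> first | exact hab.symm | trivial⟩
  loopless := ⟨by rintro (a | a) hab <;> first | exact Bs.irrefl hab | exact hab⟩

/-- `(G, A)` is a `k`-premolecule: `G` is isomorphic to a `k`-molecule via an
isomorphism sending `A` to the base. -/
def IsPremolecule {V : Type*} (k : ℕ) (G : SimpleGraph V) (A : Set V) : Prop :=
  ∃ (h : ℕ) (Bs : SimpleGraph (Fin k)) (e : G ≃g molecule k h Bs),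
    1 ≤ h ∧ k - connectivity Bs ≤ h ∧
    ∀ a : V, a ∈ A ↔ ∃ i : Fin k, e a = Sum.inl i

namespace Set

variable {α : Type*} {s t : Set α}

theorem nonempty_sdiff_equiv_sdiff_of_ncard_eq (hs : s.Finite) (ht : t.Finite)
    (h : s.ncard = t.ncard) : Nonempty (↥(s \ t) ≃ ↥(t \ s)) := by
  have := hs.to_subtype
  have := ht.to_subtype
  rw [← Finite.card_eq, Nat.card_coe_set_eq, Nat.card_coe_set_eq]
  exact (ncard_eq_ncard_iff_ncard_sdiff_eq_ncard_sdiff hs ht).mp h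

open Classical in
noncomputable def equivOfSdiffEquiv (g : ↥(s \ t) ≃ ↥(t \ s)) : s ≃ t where
  toFun a := if h : a.1 ∈ t then ⟨a, h⟩ else ⟨g ⟨a, a.2, h⟩, (g _).2.1⟩
  invFun b := if h : b.1 ∈ s then ⟨b, h⟩ else ⟨g.symm ⟨b, b.2, h⟩, (g.symm _).2.1⟩
  left_inv a := by
    by_cases h : a.1 ∈ t
    · simp [h, a.2]
    · simp [h, (g _).2.2]
  right_inv b := by
    by_cases h : b.1 ∈ s
    · simp [h, b.2]
    · simp [h, (g.symm _).2.2]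

theorem equivOfSdiffEquiv_apply_of_mem (g : ↥(s \ t) ≃ ↥(t \ s)) {a : s} (h : a.1 ∈ t) :
    (equivOfSdiffEquiv g a).1 = a := by
  simp [equivOfSdiffEquiv, h]

theorem equivOfSdiffEquiv_apply_mem_iff (g : ↥(s \ t) ≃ ↥(t \ s)) (a : s) :
    (equivOfSdiffEquiv g a).1 ∈ s ↔ a.1 ∈ t := by
  by_cases h : a.1 ∈ t
  · simp [equivOfSdiffEquiv, h, a.2]
  · simp [equivOfSdiffEquiv, h, (g _).2.2]

end Set

namespace SimpleGraph

variable {V : Type*} {G : SimpleGraph V} {A B : Set V}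

/-- `G` is the join of `G[A]` with the edgeless graph on `Aᶜ`. -/
structure IsJoinBase (G : SimpleGraph V) (A : Set V) : Prop where
  adj : ∀ ⦃u v⦄, u ∈ A → v ∉ A → G.Adj u v
  not_adj : ∀ ⦃u v⦄, u ∉ A → v ∉ A → ¬ G.Adj u v

theorem IsJoinBase.adj_iff_of_notMem (hA : G.IsJoinBase A) {u v : V} (hu : u ∉ A) :
    G.Adj u v ↔ v ∈ A :=
  ⟨fun huv => by_contra fun hv => hA.not_adj hu hv huv, fun hv => (hA.adj hv hu).symm⟩

noncomputable def IsJoinBase.induceIso (hA : G.IsJoinBase A) (hB : G.IsJoinBase B)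
    (g : ↥(A \ B) ≃ ↥(B \ A)) : G.induce A ≃g G.induce B where
  toEquiv := Set.equivOfSdiffEquiv g
  map_rel_iff' {a b} := by
    change G.Adj (Set.equivOfSdiffEquiv g a) (Set.equivOfSdiffEquiv g b) ↔ G.Adj a b
    by_cases ha : a.1 ∈ B
    case neg =>
      rw [hA.adj_iff_of_notMem (mt (Set.equivOfSdiffEquiv_apply_mem_iff g a).mp ha),
          hB.adj_iff_of_notMem ha, Set.equivOfSdiffEquiv_apply_mem_iff]
    by_cases hb : b.1 ∈ B
    case neg =>
      rw [adj_comm, hA.adj_iff_of_notMem (mt (Set.equivOfSdiffEquiv_apply_mem_iff g b).mp hb),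
          adj_comm, hB.adj_iff_of_notMem hb, Set.equivOfSdiffEquiv_apply_mem_iff]
    rw [Set.equivOfSdiffEquiv_apply_of_mem g ha, Set.equivOfSdiffEquiv_apply_of_mem g hb]

theorem IsJoinBase.preimage_iso {W : Type*} {H : SimpleGraph W} {S : Set W}
    (hS : H.IsJoinBase S) (e : G ≃g H) : G.IsJoinBase (e ⁻¹' S) where
  adj _ _ hu hv := e.map_adj_iff.mp (hS.adj hu hv)
  not_adj _ _ hu hv := mt e.map_adj_iff.mpr (hS.not_adj hu hv)

end SimpleGraph

theorem molecule_isJoinBase (k h : ℕ) (Bs : SimpleGraph (Fin k)) :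
    (molecule k h Bs).IsJoinBase (Set.range Sum.inl) where
  adj := by
    rintro _ (j | j) ⟨i, rfl⟩ hv
    exacts [(hv ⟨j, rfl⟩).elim, trivial]
  not_adj := by
    rintro (i | i) (j | j) hu hv
    exacts [(hu ⟨i, rfl⟩).elim, (hu ⟨i, rfl⟩).elim, (hv ⟨j, rfl⟩).elim, id]

namespace IsPremolecule

variable {V : Type*} {k : ℕ} {G : SimpleGraph V} {A : Set V}

theorem exists_iso_preimage_range (hA : IsPremolecule k G A) :
    ∃ (h : ℕ) (Bs : SimpleGraph (Fin k)) (e : G ≃g molecule k h Bs),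
      A = e ⁻¹' Set.range Sum.inl := by
  obtain ⟨h, Bs, e, -, -, hmem⟩ := hA
  exact ⟨h, Bs, e, Set.ext fun a => (hmem a).trans (by simp [eq_comm])⟩

theorem isJoinBase (hA : IsPremolecule k G A) : G.IsJoinBase A := by
  obtain ⟨h, Bs, e, rfl⟩ := hA.exists_iso_preimage_range
  exact (molecule_isJoinBase k h Bs).preimage_iso e

theorem finite (hA : IsPremolecule k G A) : A.Finite := by
  obtain ⟨h, Bs, e, rfl⟩ := hA.exists_iso_preimage_range
  exact (Set.finite_range _).preimage e.injective.injOn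

theorem ncard_eq (hA : IsPremolecule k G A) : A.ncard = k := by
  obtain ⟨h, Bs, e, rfl⟩ := hA.exists_iso_preimage_range
  rw [Set.ncard_preimage_of_injective_subset_range e.injective (by simp),
    Set.ncard_range_of_injective Sum.inl_injective, Nat.card_fin]

end IsPremolecule

theorem premolecule_two_bases_general {V : Type*} (k : ℕ) (G : SimpleGraph V)
    (A B : Set V) (hA : IsPremolecule k G A) (hB : IsPremolecule k G B) :
    (∀ u ∈ A \ B, ∀ v ∈ A \ B, ¬ G.Adj u v) ∧
    (∀ u ∈ B \ A, ∀ v ∈ B \ A, ¬ G.Adj u v) ∧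
    (∀ u ∈ (A ∪ B)ᶜ, ∀ v ∈ (A ∪ B)ᶜ, ¬ G.Adj u v) ∧
    Nonempty (G.induce A ≃g G.induce B) := by
  have hA' := hA.isJoinBase
  have hB' := hB.isJoinBase
  obtain ⟨g⟩ := Set.nonempty_sdiff_equiv_sdiff_of_ncard_eq hA.finite hB.finite
    (hA.ncard_eq.trans hB.ncard_eq.symm)
  exact ⟨fun u hu v hv => hB'.not_adj hu.2 hv.2, fun u hu v hv => hA'.not_adj hu.2 hv.2,
    fun u hu v hv => hA'.not_adj (fun h => hu (.inl h)) (fun h => hv (.inl h)),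
    ⟨hA'.induceIso hB' g⟩⟩

/-- if `(G, A)` and `(G, B)` are both `k`-premolecules, then the
subgraphs induced by `A \ B`, `B \ A` and `V(G) \ (A ∪ B)` are all edgeless, and
the subgraphs induced by `A` and `B` are isomorphic. -/
theorem premolecule_two_bases {V : Type*} [Fintype V] (k : ℕ) (G : SimpleGraph V)
    (A B : Set V) (hA : IsPremolecule k G A) (hB : IsPremolecule k G B) :
    (∀ u ∈ A \ B, ∀ v ∈ A \ B, ¬ G.Adj u v) ∧
    (∀ u ∈ B \ A, ∀ v ∈ B \ A, ¬ G.Adj u v) ∧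
    (∀ u ∈ (A ∪ B)ᶜ, ∀ v ∈ (A ∪ B)ᶜ, ¬ G.Adj u v) ∧
    Nonempty (G.induce A ≃g G.induce B) :=
  premolecule_two_bases_general k G A B hA hB
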